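/- arXiv:cs/0703123 — 3 statements merged into one kernel-verified Lean document; each statement's English description precedes it below -/
import Mathlib

section
/- Let N be a finite index set and x : N → ℝ with 0 ≤ x_i ≤ 1 for all i. Suppose V₁ ⊆ N and V₂ ⊆ N both have odd cardinality and both generate cuts at x, i.e. ∑_{i∈Vⱼ} x_i − ∑_{i∈N\Vⱼ} x_i > |Vⱼ| − 1 for j = 1,2. Then V₁ = V₂. In other words, at any point x ∈ [0,1]^N, at most one of the parity-check constraints introduced by a single check node can be violated. -/
theorem at_most_one_cut_per_check {ι : Type*} [DecidableEq ι]
    (N V₁ V₂ : Finset ι) (x : ι → ℝ)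
    (hx : ∀ i ∈ N, 0 ≤ x i ∧ x i ≤ 1)
    (hV₁ : V₁ ⊆ N) (hV₂ : V₂ ⊆ N)
    (hodd₁ : Odd V₁.card) (hodd₂ : Odd V₂.card)
    (hcut₁ : ∑ i ∈ V₁, x i - ∑ i ∈ N \ V₁, x i > (V₁.card : ℝ) - 1)
    (hcut₂ : ∑ i ∈ V₂, x i - ∑ i ∈ N \ V₂, x i > (V₂.card : ℝ) - 1) :
    V₁ = V₂ := by
  by_contra hne
  set g₁ : ι → ℝ := fun i => if i ∈ V₁ then 1 - x i else x i with hg₁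
  set g₂ : ι → ℝ := fun i => if i ∈ V₂ then 1 - x i else x i with hg₂
  have key : ∀ (V : Finset ι), V ⊆ N →
      (∑ i ∈ V, x i - ∑ i ∈ N \ V, x i > (V.card : ℝ) - 1) →
      ∑ i ∈ N, (if i ∈ V then 1 - x i else x i) < 1 := by
    intro V hV hcut
    have hsplit : ∑ i ∈ N, (if i ∈ V then 1 - x i else x i)
        = ∑ i ∈ V, (1 - x i) + ∑ i ∈ N \ V, x i := by
      rw [← Finset.sum_sdiff hV, add_comm]
      congr 1
      · exact Finset.sum_congr rfl fun i hi => if_pos hi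
      · exact Finset.sum_congr rfl fun i hi => if_neg (Finset.mem_sdiff.mp hi).2
    rw [hsplit, Finset.sum_sub_distrib, Finset.sum_const, nsmul_eq_mul, mul_one]
    linarith
  have h₁ : ∑ i ∈ N, g₁ i < 1 := key V₁ hV₁ hcut₁
  have h₂ : ∑ i ∈ N, g₂ i < 1 := key V₂ hV₂ hcut₂
  set Δ : Finset ι := (V₁ \ V₂) ∪ (V₂ \ V₁) with hΔ
  have hΔsub : Δ ⊆ N := by
    intro i hi
    rcases Finset.mem_union.mp hi with h | h
    · exact hV₁ (Finset.mem_sdiff.mp h).1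
    · exact hV₂ (Finset.mem_sdiff.mp h).1
  have hdisj : Disjoint (V₁ \ V₂) (V₂ \ V₁) := by
    rw [Finset.disjoint_left]
    intro a ha hb
    exact (Finset.mem_sdiff.mp hb).2 (Finset.mem_sdiff.mp ha).1
  have e1 : (V₁ \ V₂).card + (V₁ ∩ V₂).card = V₁.card :=
    Finset.card_sdiff_add_card_inter _ _
  have e2 : (V₂ \ V₁).card + (V₂ ∩ V₁).card = V₂.card :=
    Finset.card_sdiff_add_card_inter _ _
  have hic : (V₂ ∩ V₁).card = (V₁ ∩ V₂).card := by rw [Finset.inter_comm]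
  have hcardΔ : Δ.card = (V₁ \ V₂).card + (V₂ \ V₁).card :=
    Finset.card_union_of_disjoint hdisj
  have hΔne : Δ.Nonempty := by
    rw [Finset.nonempty_iff_ne_empty]
    intro h
    rw [hΔ, Finset.union_eq_empty, Finset.sdiff_eq_empty_iff_subset,
      Finset.sdiff_eq_empty_iff_subset] at h
    exact hne (Finset.Subset.antisymm h.1 h.2)
  have hΔ2 : 2 ≤ Δ.card := by
    obtain ⟨a, ha⟩ := hodd₁
    obtain ⟨b, hb⟩ := hodd₂
    have h1 : 1 ≤ Δ.card := Finset.card_pos.mpr hΔne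
    omega
  have hone : ∀ i ∈ Δ, g₁ i + g₂ i = 1 := by
    intro i hi
    rcases Finset.mem_union.mp hi with h | h
    · obtain ⟨h1, h2⟩ := Finset.mem_sdiff.mp h
      simp [hg₁, hg₂, h1, h2]
    · obtain ⟨h1, h2⟩ := Finset.mem_sdiff.mp h
      simp [hg₁, hg₂, h1, h2]
  have hnonneg : ∀ i ∈ N, 0 ≤ g₁ i + g₂ i := by
    intro i hi
    obtain ⟨hl, hr⟩ := hx i hi
    have : 0 ≤ g₁ i := by by_cases h : i ∈ V₁ <;> simp [hg₁, h] <;> linarith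
    have : 0 ≤ g₂ i := by by_cases h : i ∈ V₂ <;> simp [hg₂, h] <;> linarith
    linarith
  have hsum : (Δ.card : ℝ) ≤ ∑ i ∈ N, (g₁ i + g₂ i) := by
    calc (Δ.card : ℝ) = ∑ i ∈ Δ, (g₁ i + g₂ i) := by
          rw [Finset.sum_congr rfl hone]; simp
      _ ≤ ∑ i ∈ N, (g₁ i + g₂ i) :=
          Finset.sum_le_sum_of_subset_of_nonneg hΔsub
            (fun i hi _ => hnonneg i hi)
  rw [Finset.sum_add_distrib] at hsum
  have : (2 : ℝ) ≤ (Δ.card : ℝ) := by exact_mod_cast hΔ2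
  linarith
end

section
/- Let N be a finite index set, x : N → ℝ with 0 ≤ x_i ≤ 1 for all i, and let V₁, V₂ ⊆ N be odd-sized subsets that both generate cuts at x. With S = V₁∩V₂, V̄₁ = V₁\V₂, V̄₂ = V₂\V₁, N̄ = N\(V₁∪V₂), adding the two cut inequalities yields ∑_{i∈S} x_i − ∑_{i∈N̄} x_i > |S| + (|V̄₁| + |V̄₂|)/2 − 1. -/
theorem add_two_cuts {ι : Type*} [DecidableEq ι]
    (N V₁ V₂ : Finset ι) (x : ι → ℝ)
    (hx : ∀ i ∈ N, 0 ≤ x i ∧ x i ≤ 1)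
    (hV₁ : V₁ ⊆ N) (hV₂ : V₂ ⊆ N)
    (hodd₁ : Odd V₁.card) (hodd₂ : Odd V₂.card)
    (hcut₁ : ∑ i ∈ V₁, x i - ∑ i ∈ N \ V₁, x i > (V₁.card : ℝ) - 1)
    (hcut₂ : ∑ i ∈ V₂, x i - ∑ i ∈ N \ V₂, x i > (V₂.card : ℝ) - 1) :
    ∑ i ∈ V₁ ∩ V₂, x i - ∑ i ∈ N \ (V₁ ∪ V₂), x i >
      ((V₁ ∩ V₂).card : ℝ) + (((V₁ \ V₂).card : ℝ) + ((V₂ \ V₁).card : ℝ)) / 2 - 1 := by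
  have e1 : ∑ i ∈ V₁, x i = ∑ i ∈ V₁ ∩ V₂, x i + ∑ i ∈ V₁ \ V₂, x i :=
    (Finset.sum_inter_add_sum_sdiff V₁ V₂ x).symm
  have e2 : ∑ i ∈ V₂, x i = ∑ i ∈ V₁ ∩ V₂, x i + ∑ i ∈ V₂ \ V₁, x i := by
    rw [Finset.inter_comm]
    exact (Finset.sum_inter_add_sum_sdiff V₂ V₁ x).symm
  have s1 : (N \ V₁) ∩ V₂ = V₂ \ V₁ := by
    ext i; simp only [Finset.mem_inter, Finset.mem_sdiff]
    exact ⟨fun h => ⟨h.2, h.1.2⟩, fun h => ⟨⟨hV₂ h.1, h.2⟩, h.1⟩⟩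
  have s2 : (N \ V₁) \ V₂ = N \ (V₁ ∪ V₂) := by
    ext i; simp only [Finset.mem_sdiff, Finset.mem_union]; tauto
  have s1' : (N \ V₂) ∩ V₁ = V₁ \ V₂ := by
    ext i; simp only [Finset.mem_inter, Finset.mem_sdiff]
    exact ⟨fun h => ⟨h.2, h.1.2⟩, fun h => ⟨⟨hV₁ h.1, h.2⟩, h.1⟩⟩
  have s2' : (N \ V₂) \ V₁ = N \ (V₁ ∪ V₂) := by
    ext i; simp only [Finset.mem_sdiff, Finset.mem_union]; tauto
  have e3 : ∑ i ∈ N \ V₁, x i = ∑ i ∈ V₂ \ V₁, x i + ∑ i ∈ N \ (V₁ ∪ V₂), x i := by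
    rw [← s1, ← s2]; exact (Finset.sum_inter_add_sum_sdiff (N \ V₁) V₂ x).symm
  have e4 : ∑ i ∈ N \ V₂, x i = ∑ i ∈ V₁ \ V₂, x i + ∑ i ∈ N \ (V₁ ∪ V₂), x i := by
    rw [← s1', ← s2']; exact (Finset.sum_inter_add_sum_sdiff (N \ V₂) V₁ x).symm
  have c1 : (V₁.card : ℝ) = ((V₁ ∩ V₂).card : ℝ) + ((V₁ \ V₂).card : ℝ) := by
    rw [← Nat.cast_add, Finset.card_inter_add_card_sdiff]
  have c2 : (V₂.card : ℝ) = ((V₁ ∩ V₂).card : ℝ) + ((V₂ \ V₁).card : ℝ) := by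
    rw [Finset.inter_comm, ← Nat.cast_add, Finset.card_inter_add_card_sdiff]
  linarith
end

section
/- Let c₁ and c₂ be two parity checks with variable-node neighborhoods N₁, N₂ ⊆ {1,…,n}, and let x ∈ [0,1]ⁿ satisfy all parity-check constraints of both c₁ and c₂. Let c be the parity check with neighborhood N = (N₁∪N₂)\(N₁∩N₂) (symmetric difference). If some odd-sized subset V ⊆ N generates a cut at x (i.e. ∑_{i∈V} x_i − ∑_{i∈N\V} x_i > |V| − 1), then N₁∩N₂ contains at least two indices i with 0 < x_i < 1. -/
open Finset

/-- Cost form of a parity-check constraint. -/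
noncomputable def gcost {n : ℕ} (x : Fin n → ℝ) (W N : Finset (Fin n)) : ℝ :=
  ∑ i ∈ W, (1 - x i) + ∑ i ∈ N \ W, x i

lemma gcost_nonneg {n : ℕ} (x : Fin n → ℝ) (hx : ∀ i, 0 ≤ x i ∧ x i ≤ 1)
    (W N : Finset (Fin n)) : 0 ≤ gcost x W N :=
  add_nonneg (Finset.sum_nonneg fun i _ => by linarith [(hx i).2])
    (Finset.sum_nonneg fun i _ => (hx i).1)

lemma gcost_of_sat {n : ℕ} (x : Fin n → ℝ) {W N : Finset (Fin n)}
    (h : ∑ i ∈ W, x i - ∑ i ∈ N \ W, x i ≤ (W.card : ℝ) - 1) :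
    1 ≤ gcost x W N := by
  have h2 : ∑ i ∈ W, (1 - x i) = (W.card : ℝ) - ∑ i ∈ W, x i := by
    rw [Finset.sum_sub_distrib, Finset.sum_const, nsmul_eq_mul, mul_one]
  unfold gcost; linarith

lemma gcost_of_cut {n : ℕ} (x : Fin n → ℝ) {W N : Finset (Fin n)}
    (h : ∑ i ∈ W, x i - ∑ i ∈ N \ W, x i > (W.card : ℝ) - 1) :
    gcost x W N < 1 := by
  have h2 : ∑ i ∈ W, (1 - x i) = (W.card : ℝ) - ∑ i ∈ W, x i := by
    rw [Finset.sum_sub_distrib, Finset.sum_const, nsmul_eq_mul, mul_one]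
  unfold gcost; linarith

lemma gcost_split {n : ℕ} (x : Fin n → ℝ) {W W' N N' : Finset (Fin n)}
    (hNN : Disjoint N N') (hW : W ⊆ N) (hW' : W' ⊆ N') :
    gcost x (W ∪ W') (N ∪ N') = gcost x W N + gcost x W' N' := by
  have hWW : Disjoint W W' := hNN.mono hW hW'
  have hD : (N ∪ N') \ (W ∪ W') = (N \ W) ∪ (N' \ W') := by
    ext i
    simp only [mem_sdiff, mem_union]
    constructor
    · rintro ⟨h1 | h1, h2⟩
      · exact Or.inl ⟨h1, fun h => h2 (Or.inl h)⟩
      · exact Or.inr ⟨h1, fun h => h2 (Or.inr h)⟩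
    · rintro (⟨h1, h2⟩ | ⟨h1, h2⟩)
      · refine ⟨Or.inl h1, ?_⟩
        rintro (h | h)
        · exact h2 h
        · exact (Finset.disjoint_left.mp hNN h1) (hW' h)
      · refine ⟨Or.inr h1, ?_⟩
        rintro (h | h)
        · exact (Finset.disjoint_right.mp hNN h1) (hW h)
        · exact h2 h
  have hD2 : Disjoint (N \ W) (N' \ W') := hNN.mono sdiff_subset sdiff_subset
  unfold gcost
  rw [hD, Finset.sum_union hWW, Finset.sum_union hD2]
  ring

lemma aux_two_edges {n : ℕ} (x : Fin n → ℝ) (hx : ∀ i, 0 ≤ x i ∧ x i ≤ 1)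
    (A B M : Finset (Fin n))
    (hAM : Disjoint A M) (hBM : Disjoint B M)
    (h1 : ∀ S ⊆ A ∪ M, Odd S.card → 1 ≤ gcost x S (A ∪ M))
    (h2 : ∀ S ⊆ B ∪ M, Odd S.card → 1 ≤ gcost x S (B ∪ M))
    (V₁ V₂ : Finset (Fin n)) (hV₁ : V₁ ⊆ A) (hV₂ : V₂ ⊆ B)
    (ho : Odd V₁.card) (he : Even V₂.card)
    (hF : (M.filter (fun i => 0 < x i ∧ x i < 1)).card ≤ 1) :
    1 ≤ gcost x V₁ A + gcost x V₂ B := by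
  set F := M.filter (fun i => 0 < x i ∧ x i < 1) with hFdef
  set O := M.filter (fun i => x i = 1) with hOdef
  have hFM : F ⊆ M := filter_subset _ _
  have hOM : O ⊆ M := filter_subset _ _
  have hOF : Disjoint O F := by
    rw [Finset.disjoint_left]
    intro i hiO hiF
    simp only [hOdef, hFdef, mem_filter] at hiO hiF
    linarith [hiO.2, hiF.2.2]
  have hOFM : O ∪ F ⊆ M := union_subset hOM hFM
  -- the zero elements of M
  have hzero : ∀ i ∈ M, i ∉ O → i ∉ F → x i = 0 := by
    intro i hiM hiO hiF
    simp only [hOdef, mem_filter, hiM, true_and] at hiO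
    simp only [hFdef, mem_filter, hiM, true_and] at hiF
    rcases (hx i) with ⟨hx0, hx1⟩
    by_contra hne
    have hpos : 0 < x i := lt_of_le_of_ne hx0 (Ne.symm hne)
    exact hiF ⟨hpos, lt_of_le_of_ne hx1 hiO⟩
  -- values of gcost on O and O ∪ F
  have hgO : gcost x O M = ∑ i ∈ F, x i := by
    unfold gcost
    have e1 : ∑ i ∈ O, (1 - x i) = 0 := by
      apply Finset.sum_eq_zero
      intro i hi
      simp only [hOdef, mem_filter] at hi
      rw [hi.2]; ring
    have e2 : ∑ i ∈ M \ O, x i = ∑ i ∈ F, x i := by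
      apply (Finset.sum_subset ?_ ?_).symm
      · intro i hi
        rw [mem_sdiff]
        exact ⟨hFM hi, Finset.disjoint_right.mp hOF hi⟩
      · intro i hi hiF
        rw [mem_sdiff] at hi
        exact hzero i hi.1 hi.2 hiF
    rw [e1, e2, zero_add]
  have hgOF : gcost x (O ∪ F) M = ∑ i ∈ F, (1 - x i) := by
    unfold gcost
    have e1 : ∑ i ∈ O ∪ F, (1 - x i) = ∑ i ∈ F, (1 - x i) := by
      rw [Finset.sum_union hOF]
      have : ∑ i ∈ O, (1 - x i) = 0 := by
        apply Finset.sum_eq_zero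
        intro i hi
        simp only [hOdef, mem_filter] at hi
        rw [hi.2]; ring
      rw [this, zero_add]
    have e2 : ∑ i ∈ M \ (O ∪ F), x i = 0 := by
      apply Finset.sum_eq_zero
      intro i hi
      simp only [mem_sdiff, mem_union] at hi
      push_neg at hi
      exact hzero i hi.1 hi.2.1 hi.2.2
    rw [e1, e2, add_zero]
  have hsumOF : gcost x O M + gcost x (O ∪ F) M = (F.card : ℝ) := by
    rw [hgO, hgOF, ← Finset.sum_add_distrib]
    have : ∀ i ∈ F, x i + (1 - x i) = (1 : ℝ) := fun i _ => by ring
    rw [Finset.sum_congr rfl this, Finset.sum_const, nsmul_eq_mul, mul_one]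
  -- disjointness of V₁/V₂ from M-subsets
  have hdV₁O : Disjoint V₁ O := hAM.mono hV₁ hOM
  have hdV₁OF : Disjoint V₁ (O ∪ F) := hAM.mono hV₁ hOFM
  have hdV₂O : Disjoint V₂ O := hBM.mono hV₂ hOM
  have hdV₂OF : Disjoint V₂ (O ∪ F) := hBM.mono hV₂ hOFM
  have hcOF : (O ∪ F).card = O.card + F.card := card_union_of_disjoint hOF
  have ha := gcost_nonneg x hx V₁ A
  have hb := gcost_nonneg x hx V₂ B
  -- the four candidate constraints
  have key1O : Odd (V₁.card + O.card) → 1 ≤ gcost x V₁ A + gcost x O M := by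
    intro hp
    have := h1 (V₁ ∪ O) (union_subset (hV₁.trans subset_union_left)
      (hOM.trans subset_union_right)) (by rwa [card_union_of_disjoint hdV₁O])
    rwa [gcost_split x hAM hV₁ hOM] at this
  have key1OF : Odd (V₁.card + (O ∪ F).card) → 1 ≤ gcost x V₁ A + gcost x (O ∪ F) M := by
    intro hp
    have := h1 (V₁ ∪ (O ∪ F)) (union_subset (hV₁.trans subset_union_left)
      (hOFM.trans subset_union_right)) (by rwa [card_union_of_disjoint hdV₁OF])
    rwa [gcost_split x hAM hV₁ hOFM] at this
  have key2O : Odd (V₂.card + O.card) → 1 ≤ gcost x V₂ B + gcost x O M := by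
    intro hp
    have := h2 (V₂ ∪ O) (union_subset (hV₂.trans subset_union_left)
      (hOM.trans subset_union_right)) (by rwa [card_union_of_disjoint hdV₂O])
    rwa [gcost_split x hBM hV₂ hOM] at this
  have key2OF : Odd (V₂.card + (O ∪ F).card) → 1 ≤ gcost x V₂ B + gcost x (O ∪ F) M := by
    intro hp
    have := h2 (V₂ ∪ (O ∪ F)) (union_subset (hV₂.trans subset_union_left)
      (hOFM.trans subset_union_right)) (by rwa [card_union_of_disjoint hdV₂OF])
    rwa [gcost_split x hBM hV₂ hOFM] at this
  obtain ⟨k, hk⟩ := ho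
  obtain ⟨m, hm⟩ := he
  rcases Nat.even_or_odd O.card with ⟨p, hp⟩ | ⟨p, hp⟩
  · -- O even: V₁ ∪ O is odd
    have g1 := key1O ⟨k + p, by omega⟩
    rcases Nat.le_one_iff_eq_zero_or_eq_one.mp hF with hF0 | hF1
    · -- no fractional element: gcost x O M = 0
      have : F = ∅ := card_eq_zero.mp hF0
      rw [hgO, this, Finset.sum_empty] at g1
      linarith
    · -- one fractional element: V₂ ∪ O ∪ F odd
      have g2 := key2OF (by rw [hcOF]; exact ⟨m + p, by omega⟩)
      have : (F.card : ℝ) = 1 := by rw [hF1]; norm_num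
      linarith [hsumOF]
  · -- O odd: V₂ ∪ O is odd
    have g2 := key2O ⟨m + p, by omega⟩
    rcases Nat.le_one_iff_eq_zero_or_eq_one.mp hF with hF0 | hF1
    · have : F = ∅ := card_eq_zero.mp hF0
      rw [hgO, this, Finset.sum_empty] at g2
      linarith
    · have g1 := key1OF (by rw [hcOF]; exact ⟨k + p + 1, by omega⟩)
      have : (F.card : ℝ) = 1 := by rw [hF1]; norm_num
      linarith [hsumOF]

theorem two_edges_lemma {n : ℕ}
    (N₁ N₂ : Finset (Fin n)) (x : Fin n → ℝ)
    (hx : ∀ i, 0 ≤ x i ∧ x i ≤ 1)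
    (hsat₁ : ∀ V ⊆ N₁, Odd V.card →
      ∑ i ∈ V, x i - ∑ i ∈ N₁ \ V, x i ≤ (V.card : ℝ) - 1)
    (hsat₂ : ∀ V ⊆ N₂, Odd V.card →
      ∑ i ∈ V, x i - ∑ i ∈ N₂ \ V, x i ≤ (V.card : ℝ) - 1)
    (V : Finset (Fin n))
    (hV : V ⊆ (N₁ ∪ N₂) \ (N₁ ∩ N₂)) (hodd : Odd V.card)
    (hcut : ∑ i ∈ V, x i - ∑ i ∈ ((N₁ ∪ N₂) \ (N₁ ∩ N₂)) \ V, x i > (V.card : ℝ) - 1) :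
    2 ≤ ((N₁ ∩ N₂).filter (fun i => 0 < x i ∧ x i < 1)).card := by
  by_contra hcon
  push_neg at hcon
  have hF : ((N₁ ∩ N₂).filter (fun i => 0 < x i ∧ x i < 1)).card ≤ 1 := by omega
  set A := N₁ \ N₂ with hAdef
  set B := N₂ \ N₁ with hBdef
  set M := N₁ ∩ N₂ with hMdef
  have hA : A ∪ M = N₁ := Finset.sdiff_union_inter N₁ N₂
  have hB : B ∪ M = N₂ := by
    rw [hBdef, hMdef, Finset.inter_comm]
    exact Finset.sdiff_union_inter N₂ N₁
  have hN : (N₁ ∪ N₂) \ (N₁ ∩ N₂) = A ∪ B := by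
    ext i
    simp only [hAdef, hBdef, mem_sdiff, mem_union, mem_inter]
    tauto
  have hAM : Disjoint A M := by
    rw [Finset.disjoint_left]
    intro i hiA hiM
    rw [hAdef, mem_sdiff] at hiA
    rw [hMdef, mem_inter] at hiM
    exact hiA.2 hiM.2
  have hBM : Disjoint B M := by
    rw [Finset.disjoint_left]
    intro i hiB hiM
    rw [hBdef, mem_sdiff] at hiB
    rw [hMdef, mem_inter] at hiM
    exact hiB.2 hiM.1
  have hAB : Disjoint A B := by
    rw [Finset.disjoint_left]
    intro i hiA hiB
    rw [hAdef, mem_sdiff] at hiA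
    rw [hBdef, mem_sdiff] at hiB
    exact hiA.2 hiB.1
  have h1 : ∀ S ⊆ A ∪ M, Odd S.card → 1 ≤ gcost x S (A ∪ M) := by
    intro S hS hSo
    rw [hA] at hS ⊢
    exact gcost_of_sat x (hsat₁ S hS hSo)
  have h2 : ∀ S ⊆ B ∪ M, Odd S.card → 1 ≤ gcost x S (B ∪ M) := by
    intro S hS hSo
    rw [hB] at hS ⊢
    exact gcost_of_sat x (hsat₂ S hS hSo)
  -- split V
  set V₁ := V ∩ A with hV₁def
  set V₂ := V ∩ B with hV₂def
  have hVsub : V ⊆ A ∪ B := by rw [← hN]; exact hV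
  have hVeq : V₁ ∪ V₂ = V := by
    rw [hV₁def, hV₂def, ← Finset.inter_union_distrib_left]
    exact Finset.inter_eq_left.mpr hVsub
  have hV₁A : V₁ ⊆ A := inter_subset_right
  have hV₂B : V₂ ⊆ B := inter_subset_right
  have hdV : Disjoint V₁ V₂ := hAB.mono hV₁A hV₂B
  have hcard : V₁.card + V₂.card = V.card := by
    rw [← hVeq, card_union_of_disjoint hdV]
  -- cut in cost form
  have hcut' : gcost x V ((N₁ ∪ N₂) \ (N₁ ∩ N₂)) < 1 := gcost_of_cut x hcut
  rw [hN, ← hVeq, gcost_split x hAB hV₁A hV₂B] at hcut'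
  -- parity split
  obtain ⟨k, hk⟩ := hodd
  rcases Nat.even_or_odd V₁.card with ⟨m, hm⟩ | ⟨m, hm⟩
  · -- V₂ odd, V₁ even: apply aux with roles swapped
    have ho₂ : Odd V₂.card := ⟨k - m, by omega⟩
    have := aux_two_edges x hx B A M hBM hAM h2 h1 V₂ V₁ hV₂B hV₁A ho₂ ⟨m, hm⟩ hF
    linarith
  · have he₂ : Even V₂.card := ⟨k - m, by omega⟩
    have := aux_two_edges x hx A B M hAM hBM h1 h2 V₁ V₂ hV₁A hV₂B ⟨m, hm⟩ he₂ hF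
    linarith
end
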